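/- (Schoenberg) A symmetric hollow N×N real matrix D (zero diagonal) is a Euclidean distance matrix of some points in some Euclidean space if and only if -L D L is positive semi-definite, where L = I - (1/N)·11ᵀ. -/

import Mathlib

/-!
If `D` is the matrix of squared distances of points `x i`, then `D = r 1ᵀ + 1 rᵀ - 2 G` with `G`
the Gram matrix of the points and `r i = ‖x i‖²`. The centering matrix `L` kills `1`, so
`-L D L = 2 L G L`, which is positive semidefinite.

Conversely, if `-L D L / 2` is positive semidefinite it is the Gram matrix of some vectors `v i`
(the columns of its square root). Since `L` fixes every vector with zero sum, the quadratic forms of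
`D` and of `L D L` agree at `eᵢ - eⱼ`; for symmetric hollow `D` this reads `‖v i - v j‖² = D i j`.
-/

open Matrix
open scoped MatrixOrder ComplexOrder

namespace Matrix

def centeringMatrix (R n : Type*) [Field R] [Fintype n] [DecidableEq n] : Matrix n n R :=
  1 - (Fintype.card n : R)⁻¹ • of fun _ _ => 1

variable {n : Type*}

section sqDistMatrix

variable {E : Type*} [NormedAddCommGroup E]

def sqDistMatrix (x : n → E) : Matrix n n ℝ := of fun i j => ‖x i - x j‖ ^ 2

@[simp]
theorem sqDistMatrix_apply (x : n → E) (i j : n) : sqDistMatrix x i j = ‖x i - x j‖ ^ 2 := rfl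

theorem sqDistMatrix_eq_sub_gram [InnerProductSpace ℝ E] (x : n → E) :
    sqDistMatrix x = vecMulVec (fun i => ‖x i‖ ^ 2) 1 + vecMulVec 1 (fun i => ‖x i‖ ^ 2)
      - (2 : ℝ) • gram ℝ x := by
  ext i j
  simp only [sqDistMatrix_apply, add_apply, sub_apply, smul_apply, vecMulVec_apply, Pi.one_apply,
    gram_apply, norm_sub_sq_real, smul_eq_mul]
  ring

end sqDistMatrix

variable [Fintype n] [DecidableEq n]

theorem PosSemidef.exists_gram_eq {𝕜 : Type*} [RCLike 𝕜] {A : Matrix n n 𝕜}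
    (hA : A.PosSemidef) : ∃ v : n → EuclideanSpace 𝕜 n, gram 𝕜 v = A := by
  have hB : (CFC.sqrt A)ᴴ = CFC.sqrt A := (CFC.sqrt_nonneg A).posSemidef.isHermitian
  refine ⟨fun j => WithLp.toLp 2 fun k => CFC.sqrt A k j, ?_⟩
  refine (gram_eq_conjTranspose_mul (EuclideanSpace.basisFun n 𝕜) _).trans ?_
  change (CFC.sqrt A)ᴴ * CFC.sqrt A = A
  rw [hB, CFC.sqrt_mul_sqrt_self A hA.nonneg]

section centering

variable {R : Type*} [Field R]

theorem centeringMatrix_transpose : (centeringMatrix R n)ᵀ = centeringMatrix R n := by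
  rw [centeringMatrix, transpose_sub, transpose_one, transpose_smul]
  rfl

theorem centeringMatrix_mulVec (w : n → R) :
    centeringMatrix R n *ᵥ w = w - fun _ => (Fintype.card n : R)⁻¹ * ∑ i, w i := by
  ext i
  simp [centeringMatrix, mulVec, dotProduct, sub_mul, Finset.sum_sub_distrib, one_apply,
    Finset.mul_sum]

theorem centeringMatrix_mulVec_of_sum_eq_zero {w : n → R} (hw : ∑ i, w i = 0) :
    centeringMatrix R n *ᵥ w = w := by
  simp only [centeringMatrix_mulVec, hw, mul_zero]
  exact sub_zero w

theorem centeringMatrix_mulVec_one [CharZero R] : centeringMatrix R n *ᵥ 1 = 0 := by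
  rcases isEmpty_or_nonempty n with _ | _
  · exact Subsingleton.elim _ _
  rw [centeringMatrix_mulVec]
  ext i
  simp

theorem vecMul_centeringMatrix_one [CharZero R] : 1 ᵥ* centeringMatrix R n = 0 := by
  rw [← mulVec_transpose, centeringMatrix_transpose, centeringMatrix_mulVec_one]

theorem dotProduct_centeringMatrix_mul_mul_mulVec {u : n → R} (hu : ∑ i, u i = 0)
    (M : Matrix n n R) :
    u ⬝ᵥ (centeringMatrix R n * M * centeringMatrix R n) *ᵥ u = u ⬝ᵥ M *ᵥ u := by
  rw [← mulVec_mulVec, ← mulVec_mulVec, centeringMatrix_mulVec_of_sum_eq_zero hu,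
    dotProduct_mulVec, ← mulVec_transpose, centeringMatrix_transpose,
    centeringMatrix_mulVec_of_sum_eq_zero hu]

end centering

theorem single_sub_single_dotProduct_mulVec {R : Type*} [CommRing R] (M : Matrix n n R)
    (i j : n) :
    (Pi.single i 1 - Pi.single j 1) ⬝ᵥ M *ᵥ (Pi.single i 1 - Pi.single j 1)
      = M i i + M j j - M i j - M j i := by
  simp only [mulVec_sub, dotProduct_sub, sub_dotProduct, mulVec_single_one, single_one_dotProduct,
    col_apply]
  ring

theorem posSemidef_neg_centeringMatrix_mul_sqDistMatrix_mul {E : Type*} [NormedAddCommGroup E]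
    [InnerProductSpace ℝ E] (x : n → E) :
    (-(centeringMatrix ℝ n * sqDistMatrix x * centeringMatrix ℝ n)).PosSemidef := by
  have hCDC : -(centeringMatrix ℝ n * sqDistMatrix x * centeringMatrix ℝ n)
      = (2 : ℝ) • (centeringMatrix ℝ n * gram ℝ x * (centeringMatrix ℝ n)ᴴ) := by
    rw [sqDistMatrix_eq_sub_gram, mul_sub, mul_add, sub_mul, add_mul, mul_vecMulVec,
      vecMulVec_mul, mul_vecMulVec, vecMulVec_mul, centeringMatrix_mulVec_one,
      vecMul_centeringMatrix_one, conjTranspose_eq_transpose_of_trivial,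
      centeringMatrix_transpose]
    simp
  rw [hCDC]
  exact ((posSemidef_gram ℝ x).mul_mul_conjTranspose_same _).smul (by norm_num)

theorem exists_sqDistMatrix_eq_of_posSemidef {D : Matrix n n ℝ} (hD : D.IsSymm)
    (hdiag : ∀ i, D i i = 0)
    (hA : (-(centeringMatrix ℝ n * D * centeringMatrix ℝ n)).PosSemidef) :
    ∃ v : n → EuclideanSpace ℝ n, sqDistMatrix v = D := by
  obtain ⟨v, hv⟩ := (hA.smul (by norm_num : (0 : ℝ) ≤ 2⁻¹)).exists_gram_eq
  refine ⟨v, ext fun i j => ?_⟩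
  have hu : ∑ k, (Pi.single i 1 - Pi.single j 1 : n → ℝ) k = 0 := by simp
  have key := dotProduct_centeringMatrix_mul_mul_mulVec hu D
  rw [single_sub_single_dotProduct_mulVec, single_sub_single_dotProduct_mulVec] at key
  have hnorm : ‖v i - v j‖ ^ 2 = gram ℝ v i i + gram ℝ v j j - gram ℝ v i j - gram ℝ v j i := by
    simp only [gram_apply, norm_sub_sq_real, real_inner_self_eq_norm_sq, real_inner_comm]
    ring
  rw [sqDistMatrix_apply, hnorm, hv]
  simp only [smul_apply, neg_apply, smul_eq_mul, hdiag, hD.apply i j] at key ⊢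
  linarith

end Matrix

/-- Schoenberg's theorem: a symmetric hollow matrix D is a Euclidean distance matrix
(of some points in some Euclidean space) iff -L D L is positive semidefinite,
where L = I - (1/N)·11ᵀ. -/
theorem schoenberg (N : ℕ) (D : Matrix (Fin N) (Fin N) ℝ)
    (hsymm : ∀ i j, D i j = D j i) (hhollow : ∀ i, D i i = 0)
    (L : Matrix (Fin N) (Fin N) ℝ)
    (hL : L = 1 - (N : ℝ)⁻¹ • Matrix.of (fun _ _ : Fin N => (1 : ℝ))) :
    (∃ (η : ℕ) (x : Fin N → EuclideanSpace ℝ (Fin η)),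
        ∀ i j, D i j = ‖x i - x j‖ ^ 2) ↔ (-(L * D * L)).PosSemidef := by
  obtain rfl : L = centeringMatrix ℝ (Fin N) := by rw [hL, centeringMatrix, Fintype.card_fin]
  constructor
  · rintro ⟨η, x, hx⟩
    obtain rfl : D = sqDistMatrix x := ext hx
    exact posSemidef_neg_centeringMatrix_mul_sqDistMatrix_mul x
  · intro hA
    obtain ⟨v, hv⟩ := exists_sqDistMatrix_eq_of_posSemidef
      (IsSymm.ext fun i j => hsymm j i) hhollow hA
    exact ⟨N, v, fun i j => by rw [← hv, sqDistMatrix_apply]⟩
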